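/- For any h with 1 ≤ h ≤ n−1, the h-embedded edge-connectivity of the hypercube satisfies η_h(Q_n) ≤ 2^h (n−h). -/

import Mathlib

open SimpleGraph

def cubeGraph (n : ℕ) : SimpleGraph (Fin n → Bool) where
  Adj x y := ∃! i, x i ≠ y i
  symm := by
    refine ⟨?_⟩
    rintro x y ⟨i, hi, hu⟩
    exact ⟨i, hi.symm, fun j hj => hu j hj.symm⟩
  loopless := by refine ⟨?_⟩; rintro x ⟨i, hi, -⟩; exact hi rfl

def starGraph (n : ℕ) [NeZero n] : SimpleGraph (Equiv.Perm (Fin n)) where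
  Adj x y := ∃ i : Fin n, i ≠ 0 ∧ y = x * Equiv.swap 0 i
  symm := by
    refine ⟨?_⟩
    rintro x y ⟨i, hi, rfl⟩
    exact ⟨i, hi, by rw [mul_assoc, Equiv.swap_mul_self, mul_one]⟩
  loopless := by
    refine ⟨?_⟩
    rintro x ⟨i, hi, h⟩
    exact hi (Equiv.swap_eq_one_iff.mp (left_eq_mul.mp h)).symm

def bubbleGraph (n : ℕ) : SimpleGraph (Equiv.Perm (Fin n)) where
  Adj x y := ∃ (i : Fin n) (hi : (i : ℕ) + 1 < n), y = x * Equiv.swap i ⟨(i : ℕ) + 1, hi⟩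
  symm := by
    refine ⟨?_⟩
    rintro x y ⟨i, hi, rfl⟩
    exact ⟨i, hi, by rw [mul_assoc, Equiv.swap_mul_self, mul_one]⟩
  loopless := by
    refine ⟨?_⟩
    rintro x ⟨i, hi, h⟩
    have h1 := Equiv.swap_eq_one_iff.mp (left_eq_mul.mp h)
    have := congrArg Fin.val h1
    simp at this

def IsEmbVertexCut {V W : Type*} (G : SimpleGraph V) (H : SimpleGraph W) (S : Set V) : Prop :=
  ¬ (G.induce Sᶜ).Connected ∧
    ∀ v ∉ S, ∃ A : Set V, v ∈ A ∧ Disjoint A S ∧ Nonempty (H ≃g G.induce A)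

noncomputable def embConn {V W : Type*} (G : SimpleGraph V) (H : SimpleGraph W) : ℕ :=
  sInf {k | ∃ S : Set V, S.Finite ∧ S.ncard = k ∧ IsEmbVertexCut G H S}

def IsEmbEdgeCut {V W : Type*} (G : SimpleGraph V) (H : SimpleGraph W) (F : Set (Sym2 V)) : Prop :=
  F ⊆ G.edgeSet ∧ ¬ (G.deleteEdges F).Connected ∧
    ∀ v : V, ∃ A : Set V, v ∈ A ∧ Nonempty (H ≃g (G.deleteEdges F).induce A)

noncomputable def embEdgeConn {V W : Type*} (G : SimpleGraph V) (H : SimpleGraph W) : ℕ :=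
  sInf {k | ∃ F : Set (Sym2 V), F.Finite ∧ F.ncard = k ∧ IsEmbEdgeCut G H F}

def IsSuperVertexCut {V : Type*} (G : SimpleGraph V) (h : ℕ) (S : Set V) : Prop :=
  ¬ (G.induce Sᶜ).Connected ∧ ∀ v ∉ S, h ≤ ((G.neighborSet v) \ S).ncard

noncomputable def superConn {V : Type*} (G : SimpleGraph V) (h : ℕ) : ℕ :=
  sInf {k | ∃ S : Set V, S.Finite ∧ S.ncard = k ∧ IsSuperVertexCut G h S}

def IsSuperEdgeCut {V : Type*} (G : SimpleGraph V) (h : ℕ) (F : Set (Sym2 V)) : Prop :=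
  F ⊆ G.edgeSet ∧ ¬ (G.deleteEdges F).Connected ∧
    ∀ v : V, h ≤ ((G.deleteEdges F).neighborSet v).ncard

noncomputable def superEdgeConn {V : Type*} (G : SimpleGraph V) (h : ℕ) : ℕ :=
  sInf {k | ∃ F : Set (Sym2 V), F.Finite ∧ F.ncard = k ∧ IsSuperEdgeCut G h F}

/-!
Deleting the edges that leave one copy `Q_h × {y}` of `Q_h` disconnects that copy from the rest
of `Q_n`, while every vertex `(x, y')` still lies in its own copy `Q_h × {y'}`, none of whose
edges were deleted. A deleted edge is determined by its endpoint in the copy (`2 ^ h` choices) and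
by its direction among the last `n - h` coordinates.
-/

namespace SimpleGraph

variable {V W : Type*} {G : SimpleGraph V} {H : SimpleGraph W} {s : Set V}

lemma embEdgeConn_le_ncard {F : Set (Sym2 V)} (hF : F.Finite) (hcut : IsEmbEdgeCut G H F) :
    embEdgeConn G H ≤ F.ncard :=
  Nat.sInf_le ⟨F, hF, rfl, hcut⟩

lemma not_connected_deleteEdges_between_compl (hs : s.Nonempty) (hsc : sᶜ.Nonempty) :
    ¬ (G.deleteEdges (G.between s sᶜ).edgeSet).Connected := by
  obtain ⟨u, hu⟩ := hs
  obtain ⟨w, hw⟩ := hsc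
  intro hconn
  obtain ⟨p⟩ := hconn.preconnected u w
  obtain ⟨d, -, hd, hd'⟩ := p.exists_boundary_dart s hu hw
  have hadj := d.adj
  rw [deleteEdges_adj, mem_edgeSet, between_adj] at hadj
  exact hadj.2 ⟨hadj.1, Or.inl ⟨hd, hd'⟩⟩

lemma induce_deleteEdges_between_compl {A : Set V} (hA : ∀ x ∈ A, ∀ y ∈ A, x ∈ s ↔ y ∈ s) :
    (G.deleteEdges (G.between s sᶜ).edgeSet).induce A = G.induce A := by
  ext x y
  simp only [comap_adj, Function.Embedding.subtype_apply, deleteEdges_adj, mem_edgeSet,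
    between_adj, Set.mem_compl_iff, and_iff_left_iff_imp]
  have := hA x x.2 y y.2
  tauto

lemma isEmbEdgeCut_between_compl (hs : s.Nonempty) (hsc : sᶜ.Nonempty)
    (hcover : ∀ v, ∃ A : Set V, v ∈ A ∧ (∀ x ∈ A, ∀ y ∈ A, x ∈ s ↔ y ∈ s) ∧
      Nonempty (H ≃g G.induce A)) :
    IsEmbEdgeCut G H (G.between s sᶜ).edgeSet := by
  refine ⟨edgeSet_mono between_le, not_connected_deleteEdges_between_compl hs hsc, fun v => ?_⟩
  obtain ⟨A, hv, hA, hiso⟩ := hcover v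
  exact ⟨A, hv, by rwa [induce_deleteEdges_between_compl hA]⟩

end SimpleGraph

namespace Fin

lemma ncard_setOf_le_val {n : ℕ} (h : ℕ) : {i : Fin n | h ≤ (i : ℕ)}.ncard = n - h := by
  have hsplit := Finset.card_filter_add_card_filter_not (s := Finset.univ)
    fun i : Fin n => (i : ℕ) < h
  simp only [Fin.card_filter_val_lt, not_lt, Finset.card_univ, Fintype.card_fin] at hsplit
  rw [Set.ncard_eq_toFinset_card', Set.toFinset_ofPred]
  omega

end Fin

namespace cubeGraph

variable {n h : ℕ}

lemma exists_eq_update_of_adj {x y : Fin n → Bool} (hxy : (cubeGraph n).Adj x y) :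
    ∃ i, y = Function.update x i (!x i) := by
  obtain ⟨i, hi, huniq⟩ := hxy
  refine ⟨i, funext fun j => ?_⟩
  rcases eq_or_ne j i with rfl | hj
  · rw [Function.update_self]
    exact Bool.eq_not_iff.mpr (Ne.symm hi)
  · rw [Function.update_of_ne hj]
    by_contra hne
    exact hj (huniq j (Ne.symm hne))

lemma adj_iff_adj_comp_castLE (hn : h ≤ n) {x y : Fin n → Bool}
    (hxy : ∀ i : Fin n, h ≤ i → x i = y i) :
    (cubeGraph n).Adj x y ↔ (cubeGraph h).Adj (x ∘ Fin.castLE hn) (y ∘ Fin.castLE hn) := by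
  have hdiff : ∀ i : Fin n, x i ≠ y i → ∃ j : Fin h, Fin.castLE hn j = i := fun i hi =>
    ⟨⟨i, lt_of_not_ge fun hle => hi (hxy i hle)⟩, rfl⟩
  constructor
  · rintro ⟨i, hi, huniq⟩
    obtain ⟨j, rfl⟩ := hdiff i hi
    exact ⟨j, hi, fun k hk => Fin.castLE_injective hn (huniq _ hk)⟩
  · rintro ⟨j, hj, huniq⟩
    refine ⟨Fin.castLE hn j, hj, fun i hi => ?_⟩
    obtain ⟨k, rfl⟩ := hdiff i hi
    rw [huniq k hi]

def subcube (h : ℕ) (v : Fin n → Bool) : Set (Fin n → Bool) :=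
  {x | ∀ i : Fin n, h ≤ i → x i = v i}

lemma self_mem_subcube (v : Fin n → Bool) : v ∈ subcube h v := fun _ _ => rfl

lemma mem_subcube_iff_of_mem_subcube {v w x y : Fin n → Bool} (hx : x ∈ subcube h v)
    (hy : y ∈ subcube h v) : x ∈ subcube h w ↔ y ∈ subcube h w := by
  simp only [subcube, Set.mem_ofPred_eq]
  refine forall_congr' fun i => imp_congr_right fun hi => ?_
  rw [hx i hi, hy i hi]

def extend (v : Fin n → Bool) (a : Fin h → Bool) : Fin n → Bool :=
  fun i => if hi : (i : ℕ) < h then a ⟨i, hi⟩ else v i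

lemma extend_mem_subcube (v : Fin n → Bool) (a : Fin h → Bool) : extend v a ∈ subcube h v :=
  fun _ hi => dif_neg (not_lt.mpr hi)

lemma extend_comp_castLE (hn : h ≤ n) (v : Fin n → Bool) (a : Fin h → Bool) :
    extend v a ∘ Fin.castLE hn = a :=
  funext fun j => dif_pos j.2

lemma extend_comp_castLE_of_mem_subcube (hn : h ≤ n) {v x : Fin n → Bool}
    (hx : x ∈ subcube h v) : extend v (x ∘ Fin.castLE hn) = x := by
  funext i
  by_cases hi : (i : ℕ) < h
  · exact dif_pos hi
  · exact (dif_neg hi).trans (hx i (not_lt.mp hi)).symm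

def subcubeEquiv (hn : h ≤ n) (v : Fin n → Bool) : subcube h v ≃ (Fin h → Bool) where
  toFun x := x.1 ∘ Fin.castLE hn
  invFun a := ⟨extend v a, extend_mem_subcube v a⟩
  left_inv x := Subtype.ext (extend_comp_castLE_of_mem_subcube hn x.2)
  right_inv := extend_comp_castLE hn v

def subcubeIso (hn : h ≤ n) (v : Fin n → Bool) :
    cubeGraph h ≃g (cubeGraph n).induce (subcube h v) where
  toEquiv := (subcubeEquiv hn v).symm
  map_rel_iff' {a b} := by
    have hab : ∀ i : Fin n, h ≤ i → extend v a i = extend v b i := fun i hi =>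
      (extend_mem_subcube v a i hi).trans (extend_mem_subcube v b i hi).symm
    change (cubeGraph n).Adj (extend v a) (extend v b) ↔ _
    rw [adj_iff_adj_comp_castLE hn hab, extend_comp_castLE, extend_comp_castLE]

lemma ncard_subcube (hn : h ≤ n) (v : Fin n → Bool) : (subcube h v).ncard = 2 ^ h := by
  rw [← Nat.card_coe_set_eq, Nat.card_congr (subcubeEquiv hn v)]
  simp

lemma edgeSet_between_subcube_compl_subset (v : Fin n → Bool) :
    ((cubeGraph n).between (subcube h v) (subcube h v)ᶜ).edgeSet ⊆
      (fun p : (Fin n → Bool) × Fin n => s(p.1, Function.update p.1 p.2 (!p.1 p.2))) ''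
        (subcube h v ×ˢ {i : Fin n | h ≤ (i : ℕ)}) := by
  have hout : ∀ x y, (cubeGraph n).Adj x y → x ∈ subcube h v → y ∉ subcube h v →
      ∃ i : Fin n, h ≤ (i : ℕ) ∧ y = Function.update x i (!x i) := by
    intro x y hxy hx hy
    obtain ⟨i, rfl⟩ := exists_eq_update_of_adj hxy
    refine ⟨i, not_lt.mp fun hi => hy fun j hj => ?_, rfl⟩
    rw [Function.update_of_ne (by rintro rfl; omega), hx j hj]
  intro e he
  induction e using Sym2.ind with | _ x y => ?_
  rw [mem_edgeSet, between_adj] at he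
  rcases he with ⟨hxy, ⟨hx, hy⟩ | ⟨hx, hy⟩⟩
  · obtain ⟨i, hi, rfl⟩ := hout x y hxy hx hy
    exact ⟨(x, i), ⟨hx, hi⟩, rfl⟩
  · obtain ⟨i, hi, rfl⟩ := hout y x hxy.symm hy hx
    exact ⟨(y, i), ⟨hy, hi⟩, Sym2.eq_swap⟩

lemma ncard_edgeSet_between_subcube_compl_le (hn : h ≤ n) (v : Fin n → Bool) :
    ((cubeGraph n).between (subcube h v) (subcube h v)ᶜ).edgeSet.ncard ≤ 2 ^ h * (n - h) :=
  calc _ ≤ (subcube h v ×ˢ {i : Fin n | h ≤ (i : ℕ)}).ncard :=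
        (Set.ncard_le_ncard (edgeSet_between_subcube_compl_subset v)).trans
          (Set.ncard_image_le (Set.toFinite _))
    _ = 2 ^ h * (n - h) := by rw [Set.ncard_prod, ncard_subcube hn, Fin.ncard_setOf_le_val h]

end cubeGraph

theorem stmt2_general (n h : ℕ) (h2 : h + 1 ≤ n) :
    embEdgeConn (cubeGraph n) (cubeGraph h) ≤ 2 ^ h * (n - h) := by
  have hn : h ≤ n := by omega
  let A := cubeGraph.subcube h (fun _ : Fin n => false)
  have hA : A.Nonempty := ⟨_, cubeGraph.self_mem_subcube _⟩
  have hAc : Aᶜ.Nonempty := ⟨fun _ => true, fun hmem => by simpa using hmem ⟨h, h2⟩ le_rfl⟩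
  have hcut : IsEmbEdgeCut (cubeGraph n) (cubeGraph h) ((cubeGraph n).between A Aᶜ).edgeSet :=
    isEmbEdgeCut_between_compl hA hAc fun v =>
      ⟨cubeGraph.subcube h v, cubeGraph.self_mem_subcube v,
        fun _ hx _ hy => cubeGraph.mem_subcube_iff_of_mem_subcube hx hy,
        ⟨cubeGraph.subcubeIso hn v⟩⟩
  exact (embEdgeConn_le_ncard (Set.toFinite _) hcut).trans
    (cubeGraph.ncard_edgeSet_between_subcube_compl_le hn _)

/-- `η_h(Q_n) ≤ 2^h (n-h)` for `1 ≤ h ≤ n-1`. -/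
theorem stmt2 (n h : ℕ) (h1 : 1 ≤ h) (h2 : h + 1 ≤ n) :
    embEdgeConn (cubeGraph n) (cubeGraph h) ≤ 2 ^ h * (n - h) :=
  stmt2_general n h h2
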